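/- Let R > 0 and consider B(0,R) ⊂ ℝ², with points z = (x, y) and z⊥ = (y, −x), and let u_R(z) = πR²/8 + (|z|/4)·√(R² − |z|²) − (R²/4)·arcsin(|z|/R). Suppose ρ : B(0,R) → ℝ is continuously differentiable and φ : B(0,R) → ℝ is twice continuously differentiable, and that ∇φ(z) = ρ(z)·(∇u_R(z) + z⊥/2) for every z ∈ B(0,R). Then ρ ≡ 0 on B(0,R), and hence ∇φ ≡ 0. -/

import Mathlib

open Metric Real

/-- The map `z = (x, y) ↦ z⊥ = (y, -x)` on `ℝ²`. -/
noncomputable def zperp2 (z : EuclideanSpace ℝ (Fin 2)) : EuclideanSpace ℝ (Fin 2) :=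
  WithLp.toLp 2 ![z 1, -z 0]

/-- The candidate isoperimetric profile `u_R` on `ℝ²`. -/
noncomputable def uR2 (R : ℝ) (z : EuclideanSpace ℝ (Fin 2)) : ℝ :=
  π * R ^ 2 / 8 + ‖z‖ / 4 * Real.sqrt (R ^ 2 - ‖z‖ ^ 2) - R ^ 2 / 4 * Real.arcsin (‖z‖ / R)

/-!
Away from the origin `∇u_R(z) = s(|z|) z` with `s(r) = -r / (2√(R² - r²))`. A radial field has a
symmetric derivative, so the antisymmetric part of the derivative of `V = ∇u_R + z⊥/2` is that of
`z ↦ z⊥/2`, a constant; the symmetry of `D²φ` applied to `∇φ = ρ V` then yields the transport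
equation `Dρ(z)(z/2 - s(|z|) z⊥) = -ρ(z)`.
The characteristic through `z ≠ 0`, parametrised by its distance `r` to the origin, is
`γ(r) = r (cos θ(r), sin θ(r))` with `θ(r) = C - arcsin(r/R)`; along it `(ρ ∘ γ)' = -(2/r) ρ ∘ γ`, so
`r² ρ(γ(r))` is constant. As `r → 0⁺` it tends to `0` because `ρ` is continuous at the origin, hence
`ρ(z) = 0`, and `ρ(0) = 0` follows by continuity.
-/

open Filter Topology Set
open scoped RealInnerProductSpace

local notation "ℝ²" => EuclideanSpace ℝ (Fin 2)

section InnerProductSpace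

variable {E : Type*} [NormedAddCommGroup E] [InnerProductSpace ℝ E]

theorem fderiv_mul_inner_sub_eq_of_gradient_eventuallyEq_smul [CompleteSpace E]
    {φ ρ : E → ℝ} {V : E → E} {V' : E →L[ℝ] E} {z : E} (hφ : ContDiffAt ℝ 2 φ z)
    (hρ : DifferentiableAt ℝ ρ z) (hV : HasFDerivAt V V' z)
    (h : gradient φ =ᶠ[𝓝 z] fun w => ρ w • V w) (u v : E) :
    fderiv ℝ ρ z u * ⟪v, V z⟫ - fderiv ℝ ρ z v * ⟪u, V z⟫ = ρ z * (⟪u, V' v⟫ - ⟪v, V' u⟫) := by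
  have hD2 : HasFDerivAt (fderiv ℝ φ) (fderiv ℝ (fderiv ℝ φ) z) z :=
    ((hφ.fderiv_right (m := 1) le_rfl).differentiableAt one_ne_zero).hasFDerivAt
  have hsymm := (hφ.isSymmSndFDerivAt (by simp [minSmoothness_of_isRCLikeNormedField])).eq u v
  have hsecond : ∀ u v, fderiv ℝ (fderiv ℝ φ) z u v
      = ρ z * ⟪v, V' u⟫ + ⟪v, V z⟫ * fderiv ℝ ρ z u := by
    intro u v
    have hlhs : HasFDerivAt (fun w => fderiv ℝ φ w v)
        ((ContinuousLinearMap.apply ℝ ℝ v).comp (fderiv ℝ (fderiv ℝ φ) z)) z :=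
      (ContinuousLinearMap.apply ℝ ℝ v).hasFDerivAt.comp z hD2
    have hrhs : HasFDerivAt (fun w => ρ w * ⟪v, V w⟫)
        (ρ z • ((innerSL ℝ v).comp V') + ⟪v, V z⟫ • fderiv ℝ ρ z) z :=
      hρ.hasFDerivAt.mul ((innerSL ℝ v).hasFDerivAt.comp z hV)
    have hev : (fun w => fderiv ℝ φ w v) =ᶠ[𝓝 z] fun w => ρ w * ⟪v, V w⟫ := by
      filter_upwards [h] with w hw
      rw [← inner_gradient_left, hw, real_inner_smul_left, real_inner_comm]
    simpa using congrArg (· u) (hlhs.unique (hrhs.congr_of_eventuallyEq hev))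
  rw [hsecond, hsecond] at hsymm
  linarith

theorem hasFDerivAt_norm_of_ne_zero {x : E} (hx : x ≠ 0) :
    HasFDerivAt (‖·‖) (‖x‖⁻¹ • innerSL ℝ x) x := by
  have h := (hasDerivAt_sqrt (pow_ne_zero 2 (norm_ne_zero_iff.2 hx))).comp_hasFDerivAt x
    (hasStrictFDerivAt_norm_sq x).hasFDerivAt
  simp only [Function.comp_def, sqrt_sq (norm_nonneg _)] at h
  refine h.congr_fderiv ?_
  ext v
  simp
  field_simp

theorem HasDerivAt.hasFDerivAt_comp_norm {g : ℝ → ℝ} {g' : ℝ} {x : E}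
    (hg : HasDerivAt g g' ‖x‖) (hx : x ≠ 0) :
    HasFDerivAt (fun w => g ‖w‖) ((g' / ‖x‖) • innerSL ℝ x) x := by
  refine (hg.comp_hasFDerivAt x (hasFDerivAt_norm_of_ne_zero hx)).congr_fderiv ?_
  rw [smul_smul, div_eq_mul_inv]

theorem HasDerivAt.hasGradientAt_comp_norm [CompleteSpace E] {g : ℝ → ℝ} {g' : ℝ} {x : E}
    (hg : HasDerivAt g g' ‖x‖) (hx : x ≠ 0) :
    HasGradientAt (fun w => g ‖w‖) ((g' / ‖x‖) • x) x := by
  rw [hasGradientAt_iff_hasFDerivAt]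
  refine (hg.hasFDerivAt_comp_norm hx).congr_fderiv ?_
  ext v
  simp

theorem HasDerivAt.exists_hasFDerivAt_comp_norm_smul_isSymmetric {g : ℝ → ℝ} {g' : ℝ} {x : E}
    (hg : HasDerivAt g g' ‖x‖) (hx : x ≠ 0) :
    ∃ L : E →L[ℝ] E, HasFDerivAt (fun w => g ‖w‖ • w) L x ∧ (L : E →ₗ[ℝ] E).IsSymmetric := by
  refine ⟨_, (hg.hasFDerivAt_comp_norm hx).smul (hasFDerivAt_id x), fun u v => ?_⟩
  simp [inner_add_left, inner_add_right, real_inner_smul_right, real_inner_comm]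
  ring

end InnerProductSpace

noncomputable def zperp2L : ℝ² →L[ℝ] ℝ² :=
  LinearMap.toContinuousLinearMap
    { toFun := zperp2
      map_add' := fun u v => by ext i; fin_cases i <;> simp [zperp2, add_comm]
      map_smul' := fun c u => by ext i; fin_cases i <;> simp [zperp2] }

@[simp] theorem zperp2L_apply (z : ℝ²) : zperp2L z = zperp2 z := rfl

theorem zperp2_add (u v : ℝ²) : zperp2 (u + v) = zperp2 u + zperp2 v := map_add zperp2L u v

theorem zperp2_smul (c : ℝ) (u : ℝ²) : zperp2 (c • u) = c • zperp2 u := map_smul zperp2L c u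

theorem zperp2_zperp2 (z : ℝ²) : zperp2 (zperp2 z) = -z := by
  ext i; fin_cases i <;> simp [zperp2]

theorem inner_zperp2_right (u v : ℝ²) : ⟪u, zperp2 v⟫ = -⟪zperp2 u, v⟫ := by
  simp [zperp2, EuclideanSpace.inner_eq_star_dotProduct, dotProduct, Fin.sum_univ_two]

theorem zperp2_single_one : zperp2 (EuclideanSpace.single 1 1) = EuclideanSpace.single 0 1 := by
  ext i; fin_cases i <;> simp [zperp2]

theorem ContinuousLinearMap.map_zperp2 (ℓ : ℝ² →L[ℝ] ℝ) (V : ℝ²) :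
    ℓ (zperp2 V) = ℓ (EuclideanSpace.single 0 1) * ⟪EuclideanSpace.single 1 1, V⟫
      - ℓ (EuclideanSpace.single 1 1) * ⟪EuclideanSpace.single 0 1, V⟫ := by
  have : zperp2 V = V 1 • EuclideanSpace.single 0 1 - V 0 • EuclideanSpace.single 1 1 := by
    ext i; fin_cases i <;> simp [zperp2]
  simp [this, EuclideanSpace.inner_single_left]
  ring

theorem fderiv_apply_zperp2_eq_of_gradient_eventuallyEq {φ ρ : ℝ² → ℝ} {V : ℝ² → ℝ²}
    {L : ℝ² →L[ℝ] ℝ²} {z : ℝ²} (hφ : ContDiffAt ℝ 2 φ z) (hρ : DifferentiableAt ℝ ρ z)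
    (hV : HasFDerivAt V L z) (hL : (L : ℝ² →ₗ[ℝ] ℝ²).IsSymmetric)
    (h : gradient φ =ᶠ[𝓝 z] fun w => ρ w • (V w + (1 / 2 : ℝ) • zperp2 w)) :
    fderiv ℝ ρ z (zperp2 (V z + (1 / 2 : ℝ) • zperp2 z)) = ρ z := by
  rw [(fderiv ℝ ρ z).map_zperp2]
  set e₀ : ℝ² := EuclideanSpace.single 0 1
  set e₁ : ℝ² := EuclideanSpace.single 1 1
  have hcurl := fderiv_mul_inner_sub_eq_of_gradient_eventuallyEq_smul hφ hρ
    (hV.add (zperp2L.hasFDerivAt.const_smul (1 / 2 : ℝ))) h e₀ e₁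
  simp only [Pi.add_apply, Pi.smul_apply, zperp2L_apply] at hcurl
  have hsymm : ⟪e₀, L e₁⟫ = ⟪e₁, L e₀⟫ := by
    rw [← ContinuousLinearMap.coe_coe, ← hL, real_inner_comm]
  have hperp : ⟪e₀, zperp2 e₁⟫ = 1 := by
    simp [e₀, e₁, zperp2_single_one]
  have hperp' : ⟪e₁, zperp2 e₀⟫ = -1 := by
    rw [inner_zperp2_right, real_inner_comm, hperp]
  rw [hcurl]
  simp [inner_add_right, real_inner_smul_right, hsymm, hperp, hperp']
  ring

noncomputable def uRProfile (R r : ℝ) : ℝ :=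
  π * R ^ 2 / 8 + r / 4 * √(R ^ 2 - r ^ 2) - R ^ 2 / 4 * arcsin (r / R)

noncomputable def uRSlope (R r : ℝ) : ℝ := -r / (2 * √(R ^ 2 - r ^ 2))

theorem uR2_eq_uRProfile (R : ℝ) : uR2 R = fun z => uRProfile R ‖z‖ := rfl

theorem hasDerivAt_sqrt_sq_sub {R r : ℝ} (hr : |r| < R) :
    HasDerivAt (fun t => √(R ^ 2 - t ^ 2)) (-r / √(R ^ 2 - r ^ 2)) r := by
  have hpos : 0 < R ^ 2 - r ^ 2 := by nlinarith [abs_nonneg r, sq_abs r]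
  refine ((hasDerivAt_sqrt hpos.ne').comp r ((hasDerivAt_pow 2 r).const_sub _)).congr_deriv ?_
  field_simp
  ring

theorem hasDerivAt_arcsin_div {R r : ℝ} (hr : |r| < R) :
    HasDerivAt (fun t => arcsin (t / R)) (1 / √(R ^ 2 - r ^ 2)) r := by
  have hR : 0 < R := (abs_nonneg r).trans_lt hr
  have hlt : |r / R| < 1 := by rwa [abs_div, abs_of_pos hR, div_lt_one hR]
  obtain ⟨h₁, h₂⟩ := abs_lt.1 hlt
  refine ((hasDerivAt_arcsin h₁.ne' h₂.ne).comp r ((hasDerivAt_id r).div_const R)).congr_deriv ?_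
  rw [show 1 - (r / R) ^ 2 = (R ^ 2 - r ^ 2) / R ^ 2 by field_simp, sqrt_div' _ (sq_nonneg R),
    sqrt_sq hR.le]
  field_simp

theorem hasDerivAt_uRProfile {R r : ℝ} (hr : |r| < R) :
    HasDerivAt (uRProfile R) (r * uRSlope R r) r := by
  have hpos : 0 < R ^ 2 - r ^ 2 := by nlinarith [abs_nonneg r, sq_abs r]
  have hsq : √(R ^ 2 - r ^ 2) ^ 2 = R ^ 2 - r ^ 2 := sq_sqrt hpos.le
  refine (((hasDerivAt_const r _).add (((hasDerivAt_id r).div_const 4).mul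
    (hasDerivAt_sqrt_sq_sub hr))).sub ((hasDerivAt_arcsin_div hr).const_mul _)).congr_deriv ?_
  rw [uRSlope, id]
  field_simp
  rw [hsq]
  ring

theorem differentiableAt_uRSlope {R r : ℝ} (hr : |r| < R) : DifferentiableAt ℝ (uRSlope R) r := by
  have hpos : 0 < R ^ 2 - r ^ 2 := by nlinarith [abs_nonneg r, sq_abs r]
  exact differentiableAt_id.neg.div ((hasDerivAt_sqrt_sq_sub hr).differentiableAt.const_mul 2)
    (by positivity)

theorem eventuallyEq_gradient_uR2 {R : ℝ} {z : ℝ²} (hz : z ∈ ball 0 R) (hz0 : z ≠ 0) :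
    gradient (uR2 R) =ᶠ[𝓝 z] fun w => uRSlope R ‖w‖ • w := by
  filter_upwards [(isOpen_ball.inter isOpen_compl_singleton).mem_nhds ⟨hz, hz0⟩]
    with w ⟨hw, hw0⟩
  have hw' : |‖w‖| < R := by simpa using hw
  rw [uR2_eq_uRProfile, ((hasDerivAt_uRProfile hw').hasGradientAt_comp_norm hw0).gradient,
    mul_div_cancel_left₀ _ (norm_ne_zero_iff.2 hw0)]

theorem exists_hasFDerivAt_gradient_uR2_isSymmetric {R : ℝ} {z : ℝ²} (hz : z ∈ ball 0 R)
    (hz0 : z ≠ 0) :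
    ∃ L : ℝ² →L[ℝ] ℝ², HasFDerivAt (gradient (uR2 R)) L z ∧ (L : ℝ² →ₗ[ℝ] ℝ²).IsSymmetric := by
  have hz' : |‖z‖| < R := by simpa using hz
  obtain ⟨L, hL, hsymm⟩ :=
    (differentiableAt_uRSlope hz').hasDerivAt.exists_hasFDerivAt_comp_norm_smul_isSymmetric hz0
  exact ⟨L, hL.congr_of_eventuallyEq (eventuallyEq_gradient_uR2 hz hz0), hsymm⟩

/-- The right-hand side `z/2 - ū'(|z|²/4) z⊥/2` of the characteristic equation of the paper,
where `u_R(z) = ū(|z|²/4)`, so that `ū'(|z|²/4) / 2 = uRSlope R |z|`. -/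
noncomputable def charField (R : ℝ) (z : ℝ²) : ℝ² :=
  (1 / 2 : ℝ) • z - uRSlope R ‖z‖ • zperp2 z

theorem fderiv_apply_charField {R : ℝ} {ρ φ : ℝ² → ℝ}
    (hρ : ContDiffOn ℝ 1 ρ (ball 0 R)) (hφ : ContDiffOn ℝ 2 φ (ball 0 R))
    (h : ∀ z ∈ ball (0 : ℝ²) R,
      gradient φ z = ρ z • (gradient (uR2 R) z + (1 / 2 : ℝ) • zperp2 z))
    {z : ℝ²} (hz : z ∈ ball 0 R) (hz0 : z ≠ 0) : fderiv ℝ ρ z (charField R z) = -ρ z := by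
  obtain ⟨L, hL, hsymm⟩ := exists_hasFDerivAt_gradient_uR2_isSymmetric hz hz0
  have key := fderiv_apply_zperp2_eq_of_gradient_eventuallyEq
    (hφ.contDiffAt (isOpen_ball.mem_nhds hz))
    ((hρ.contDiffAt (isOpen_ball.mem_nhds hz)).differentiableAt one_ne_zero) hL hsymm
    (eventually_of_mem (isOpen_ball.mem_nhds hz) h)
  rw [(eventuallyEq_gradient_uR2 hz hz0).eq_of_nhds, zperp2_add, zperp2_smul, zperp2_smul,
    zperp2_zperp2, smul_neg] at key
  rw [charField, ← key, ← map_neg]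
  congr 1
  abel

noncomputable def unitVec (t : ℝ) : ℝ² := WithLp.toLp 2 ![cos t, sin t]

theorem unitVec_eq (t : ℝ) :
    unitVec t = cos t • EuclideanSpace.single 0 1 + sin t • EuclideanSpace.single 1 1 := by
  ext i; fin_cases i <;> simp [unitVec]

theorem norm_unitVec (t : ℝ) : ‖unitVec t‖ = 1 := by
  simp [unitVec, EuclideanSpace.norm_eq, Fin.sum_univ_two]

theorem hasDerivAt_unitVec (t : ℝ) : HasDerivAt unitVec (-zperp2 (unitVec t)) t := by
  have h := ((hasDerivAt_cos t).smul_const (EuclideanSpace.single 0 1 : ℝ²)).add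
    ((hasDerivAt_sin t).smul_const (EuclideanSpace.single 1 1 : ℝ²))
  rw [show unitVec = _ from funext unitVec_eq]
  refine h.congr_deriv ?_
  ext i; fin_cases i <;> simp [zperp2]

theorem exists_eq_norm_smul_unitVec (z : ℝ²) : ∃ t, z = ‖z‖ • unitVec t := by
  set w : ℂ := Complex.orthonormalBasisOneI.repr.symm z
  have hw : ‖w‖ = ‖z‖ := LinearIsometryEquiv.norm_map _ z
  refine ⟨Complex.arg w, ?_⟩
  ext i; fin_cases i
  · simp [unitVec, ← hw, Complex.norm_mul_cos_arg, w]
  · simp [unitVec, ← hw, Complex.norm_mul_sin_arg, w]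

noncomputable def charCurve (R C r : ℝ) : ℝ² := r • unitVec (C - arcsin (r / R))

theorem norm_charCurve (R C : ℝ) {r : ℝ} (hr : 0 ≤ r) : ‖charCurve R C r‖ = r := by
  simp [charCurve, norm_smul, norm_unitVec, abs_of_nonneg hr]

theorem hasDerivAt_charCurve {R C r : ℝ} (h0 : 0 < r) (hr : r < R) :
    HasDerivAt (charCurve R C) ((2 / r) • charField R (charCurve R C r)) r := by
  have hr' : |r| < R := by rwa [abs_of_pos h0]
  have hθ := (hasDerivAt_arcsin_div hr').const_sub C
  refine ((hasDerivAt_id r).smul ((hasDerivAt_unitVec _).scomp r hθ)).congr_deriv ?_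
  rw [charField, norm_charCurve R C h0.le]
  simp only [charCurve, zperp2_smul, uRSlope, id, Function.comp_apply]
  match_scalars <;> field_simp

theorem tendsto_charCurve_nhdsGT_zero (R C : ℝ) : Tendsto (charCurve R C) (𝓝[>] 0) (𝓝 0) := by
  rw [tendsto_zero_iff_norm_tendsto_zero]
  exact (tendsto_nhdsWithin_of_tendsto_nhds tendsto_id).congr'
    (eventually_nhdsWithin_of_forall fun r hr => (norm_charCurve R C (le_of_lt hr)).symm)

theorem eq_zero_of_hasDerivAt_eq_neg_div_mul {f : ℝ → ℝ} {R L : ℝ} {n : ℕ} (hn : n ≠ 0)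
    (hf : ∀ r ∈ Ioo 0 R, HasDerivAt f (-(n / r) * f r) r) (hlim : Tendsto f (𝓝[>] 0) (𝓝 L))
    {r : ℝ} (hr : r ∈ Ioo 0 R) : f r = 0 := by
  have hF : ∀ s ∈ Ioo 0 R, HasDerivAt (fun s => f s * s ^ n) 0 s := by
    intro s hs
    refine ((hf s hs).mul (hasDerivAt_pow n s)).congr_deriv ?_
    obtain ⟨m, rfl⟩ := Nat.exists_eq_add_one_of_ne_zero hn
    rw [Nat.add_sub_cancel, pow_succ]
    field_simp [hs.1.ne']
    ring
  obtain ⟨a, ha⟩ := isOpen_Ioo.exists_is_const_of_deriv_eq_zero isPreconnected_Ioo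
    (fun s hs => (hF s hs).differentiableAt.differentiableWithinAt) (fun s hs => (hF s hs).deriv)
  have hlim₀ : Tendsto (fun s => f s * s ^ n) (𝓝[>] 0) (𝓝 0) := by
    simpa [zero_pow hn] using
      hlim.mul (((continuous_pow n).tendsto 0).mono_left nhdsWithin_le_nhds)
  have hlimₐ : Tendsto (fun s => f s * s ^ n) (𝓝[>] 0) (𝓝 a) :=
    tendsto_const_nhds.congr' (eventually_of_mem (Ioo_mem_nhdsGT (hr.1.trans hr.2))
      fun s hs => (ha s hs).symm)
  have hfr := ha r hr
  rw [tendsto_nhds_unique hlimₐ hlim₀] at hfr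
  exact (mul_eq_zero.1 hfr).resolve_right (pow_ne_zero n hr.1.ne')

theorem eq_zero_of_gradient_eq_smul_of_ne_zero {R : ℝ} {ρ φ : ℝ² → ℝ}
    (hρ : ContDiffOn ℝ 1 ρ (ball 0 R)) (hφ : ContDiffOn ℝ 2 φ (ball 0 R))
    (h : ∀ z ∈ ball (0 : ℝ²) R,
      gradient φ z = ρ z • (gradient (uR2 R) z + (1 / 2 : ℝ) • zperp2 z))
    {z : ℝ²} (hz : z ∈ ball 0 R) (hz0 : z ≠ 0) : ρ z = 0 := by
  obtain ⟨t, ht⟩ := exists_eq_norm_smul_unitVec z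
  have hγz : charCurve R (t + arcsin (‖z‖ / R)) ‖z‖ = z := by
    rw [charCurve, add_sub_cancel_right]
    exact ht.symm
  set γ := charCurve R (t + arcsin (‖z‖ / R))
  have hγmem : ∀ r ∈ Ioo 0 R, γ r ∈ ball 0 R ∧ γ r ≠ 0 := fun r hr => by
    rw [mem_ball_zero_iff, ← norm_ne_zero_iff, norm_charCurve _ _ hr.1.le]
    exact ⟨hr.2, hr.1.ne'⟩
  have hderiv : ∀ r ∈ Ioo 0 R, HasDerivAt (ρ ∘ γ) (-((2 : ℕ) / r) * (ρ ∘ γ) r) r := by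
    intro r hr
    obtain ⟨hball, hne⟩ := hγmem r hr
    have hρd : DifferentiableAt ℝ ρ (γ r) :=
      (hρ.contDiffAt (isOpen_ball.mem_nhds hball)).differentiableAt one_ne_zero
    refine (hρd.hasFDerivAt.comp_hasDerivAt r (hasDerivAt_charCurve hr.1 hr.2)).congr_deriv ?_
    rw [map_smul, fderiv_apply_charField hρ hφ h hball hne, smul_eq_mul, Function.comp_apply,
      Nat.cast_ofNat, mul_neg, neg_mul]
  have hlim : Tendsto (ρ ∘ γ) (𝓝[>] 0) (𝓝 (ρ 0)) :=
    ((hρ.continuousOn.continuousAt (ball_mem_nhds 0 (pos_of_mem_ball hz))).tendsto).comp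
      (tendsto_charCurve_nhdsGT_zero _ _)
  have hργ := eq_zero_of_hasDerivAt_eq_neg_div_mul two_ne_zero hderiv hlim
    ⟨norm_pos_iff.2 hz0, mem_ball_zero_iff.1 hz⟩
  rwa [Function.comp_apply, hγz] at hργ

theorem stmt_17_general (R : ℝ) (ρ φ : EuclideanSpace ℝ (Fin 2) → ℝ)
    (hρ : ContDiffOn ℝ 1 ρ (ball 0 R)) (hφ : ContDiffOn ℝ 2 φ (ball 0 R))
    (h : ∀ z ∈ ball (0 : EuclideanSpace ℝ (Fin 2)) R,
      gradient φ z = ρ z • (gradient (uR2 R) z + (1 / 2 : ℝ) • zperp2 z)) :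
    ∀ z ∈ ball (0 : EuclideanSpace ℝ (Fin 2)) R, ρ z = 0 ∧ gradient φ z = 0 := by
  have hpunct : ∀ z ∈ ball (0 : ℝ²) R, z ≠ 0 → ρ z = 0 := fun z hz hz0 =>
    eq_zero_of_gradient_eq_smul_of_ne_zero hρ hφ h hz hz0
  intro z hz
  have hρz : ρ z = 0 := by
    rcases eq_or_ne z 0 with rfl | hz0
    · have hball : ball (0 : ℝ²) R ∈ 𝓝 0 := ball_mem_nhds 0 (pos_of_mem_ball hz)
      have hev : ρ =ᶠ[𝓝[≠] 0] 0 := by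
        filter_upwards [self_mem_nhdsWithin, mem_nhdsWithin_of_mem_nhds hball] with w hw0 hw
        exact hpunct w hw hw0
      exact (((hρ.continuousOn.continuousAt hball).eventuallyEq_nhds_iff_eventuallyEq_nhdsNE
        continuousAt_const).1 hev).eq_of_nhds
    · exact hpunct z hz hz0
  exact ⟨hρz, by rw [h z hz, hρz, zero_smul]⟩

theorem stmt_17 (R : ℝ) (hR : 0 < R) (ρ φ : EuclideanSpace ℝ (Fin 2) → ℝ)
    (hρ : ContDiffOn ℝ 1 ρ (ball 0 R)) (hφ : ContDiffOn ℝ 2 φ (ball 0 R))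
    (h : ∀ z ∈ ball (0 : EuclideanSpace ℝ (Fin 2)) R,
      gradient φ z = ρ z • (gradient (uR2 R) z + (1 / 2 : ℝ) • zperp2 z)) :
    ∀ z ∈ ball (0 : EuclideanSpace ℝ (Fin 2)) R, ρ z = 0 ∧ gradient φ z = 0 :=
  stmt_17_general R ρ φ hρ hφ h
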